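/- Fix integers a, b, m with 1 ≤ a < b ≤ m and reals x, y ≥ 0. Define p_n(a,b,m;x,y) = Σ x^{ℓ(λ)} y^{ℓ(μ)} over pairs (λ,μ) of a partition λ and a distinct-parts partition μ with |λ|+|μ| = n and ℓ_{a,m}(λ)+ℓ_{a,m}(μ) > ℓ_{b,m}(λ)+ℓ_{b,m}(μ). Then for all n ≥ 0, p_{n+m}(a,b,m;x,y) ≥ p_n(a,b,m;x,y). -/

import Mathlib

/-- The number of parts of the multiset `μ` congruent to `a` modulo `m`. -/
def countRes (m a : ℕ) (μ : Multiset ℕ) : ℕ :=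
  (μ.filter (fun p => p % m = a % m)).card

/-- The residue-weighted biased partition function
`p_n(a,b,m;x,y) = Σ x^{ℓ(λ)} y^{ℓ(μ)}`, summed over pairs `(λ, μ)` of a
partition `λ` and a distinct-parts partition `μ` with `|λ| + |μ| = n` and
`ℓ_{a,m}(λ) + ℓ_{a,m}(μ) > ℓ_{b,m}(λ) + ℓ_{b,m}(μ)`. -/
noncomputable def pw (a b m : ℕ) (x y : ℝ) (n : ℕ) : ℝ :=
  ∑ kl ∈ Finset.HasAntidiagonal.antidiagonal n,
    ∑ p ∈ (Finset.univ : Finset (kl.1.Partition × kl.2.Partition)).filter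
        (fun p => p.2.parts.Nodup ∧
          countRes m b p.1.parts + countRes m b p.2.parts <
            countRes m a p.1.parts + countRes m a p.2.parts),
      x ^ Multiset.card p.1.parts * y ^ Multiset.card p.2.parts


/-!
Raise the largest part of `λ` by `m`, or, when `λ` is empty, the largest part of `μ` (the bias
condition rules out `λ = μ = ∅`). This keeps the numbers of parts, the residues of all parts
modulo `m` and the distinctness of the parts of `μ`, and it is undone by lowering the largest
part by `m`. So it injects the pairs counted by `p_n` into those counted by `p_{n+m}`, preserving
weights, and all weights are nonnegative.
-/

theorem Multiset.sup_mem_of_ne_zero {α : Type*} [LinearOrder α] [OrderBot α] {s : Multiset α}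
    (hs : s ≠ 0) : s.sup ∈ s := by
  induction s using Multiset.induction with
  | empty => exact absurd rfl hs
  | cons a t ih =>
    rw [Multiset.sup_cons]
    rcases eq_or_ne t 0 with rfl | ht
    · simp
    rcases le_total a t.sup with h | h
    · rw [sup_eq_right.mpr h]
      exact Multiset.mem_cons_of_mem (ih ht)
    · rw [sup_eq_left.mpr h]
      exact Multiset.mem_cons_self a t

theorem Finset.sum_le_sum_of_injOn {ι κ M : Type*} [AddCommMonoid M] [PartialOrder M]
    [IsOrderedAddMonoid M] {s : Finset ι} {t : Finset κ} {f : ι → M}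
    {g : κ → M} (e : ι → κ) (he : Set.InjOn e s) (hst : Set.MapsTo e s t)
    (hfg : ∀ i ∈ s, f i = g (e i)) (hg : ∀ j ∈ t, 0 ≤ g j) :
    ∑ i ∈ s, f i ≤ ∑ j ∈ t, g j := by
  classical
  calc ∑ i ∈ s, f i = ∑ j ∈ s.image e, g j := by
        rw [Finset.sum_image he]
        exact Finset.sum_congr rfl hfg
    _ ≤ ∑ j ∈ t, g j :=
        Finset.sum_le_sum_of_subset_of_nonneg (Finset.image_subset_iff.mpr hst)
          fun j hj _ => hg j hj

theorem countRes_cons (m c p : ℕ) (s : Multiset ℕ) :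
    countRes m c (p ::ₘ s) = countRes m c s + if p % m = c % m then 1 else 0 := by
  simp only [countRes, Multiset.filter_cons]
  split_ifs <;> simp

@[simp]
theorem countRes_zero (m c : ℕ) : countRes m c 0 = 0 := rfl

namespace BiasedPartition

def raiseMax (m : ℕ) (s : Multiset ℕ) : Multiset ℕ := (s.sup + m) ::ₘ s.erase s.sup

section raiseMax

variable {m : ℕ} {s : Multiset ℕ}

theorem raiseMax_ne_zero : raiseMax m s ≠ 0 := Multiset.cons_ne_zero

theorem card_raiseMax (hs : s ≠ 0) : Multiset.card (raiseMax m s) = Multiset.card s := by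
  rw [raiseMax, Multiset.card_cons, Multiset.card_erase_add_one (Multiset.sup_mem_of_ne_zero hs)]

theorem sum_raiseMax (hs : s ≠ 0) : (raiseMax m s).sum = s.sum + m := by
  conv_rhs => rw [← Multiset.cons_erase (Multiset.sup_mem_of_ne_zero hs)]
  rw [raiseMax, Multiset.sum_cons, Multiset.sum_cons]
  ring

theorem countRes_raiseMax (c : ℕ) (hs : s ≠ 0) :
    countRes m c (raiseMax m s) = countRes m c s := by
  conv_rhs => rw [← Multiset.cons_erase (Multiset.sup_mem_of_ne_zero hs)]
  rw [raiseMax, countRes_cons, countRes_cons, Nat.add_mod_right]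

theorem pos_of_mem_raiseMax (hs : s ≠ 0) (hpos : ∀ i ∈ s, 0 < i) {i : ℕ}
    (hi : i ∈ raiseMax m s) : 0 < i := by
  rcases Multiset.mem_cons.mp hi with rfl | hi
  · exact Nat.add_pos_left (hpos _ (Multiset.sup_mem_of_ne_zero hs)) m
  · exact hpos i (Multiset.mem_of_mem_erase hi)

theorem nodup_raiseMax (hs : s.Nodup) : (raiseMax m s).Nodup := by
  refine Multiset.nodup_cons.mpr ⟨fun hmem => ?_, hs.erase _⟩
  have hle : s.sup + m ≤ s.sup := Multiset.le_sup (Multiset.mem_of_mem_erase hmem)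
  -- a collision forces `m = 0`, and then `s.sup` would occur twice in `s`
  obtain rfl : m = 0 := by omega
  exact hs.notMem_erase hmem

theorem sup_raiseMax : (raiseMax m s).sup = s.sup + m := by
  have : (s.erase s.sup).sup ≤ s.sup :=
    Multiset.sup_le.mpr fun i hi => Multiset.le_sup (Multiset.mem_of_mem_erase hi)
  rw [raiseMax, Multiset.sup_cons]
  omega

def lowerMax (m : ℕ) (s : Multiset ℕ) : Multiset ℕ := (s.sup - m) ::ₘ s.erase s.sup

theorem lowerMax_raiseMax (hs : s ≠ 0) : lowerMax m (raiseMax m s) = s := by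
  rw [lowerMax, sup_raiseMax, Nat.add_sub_cancel, raiseMax, Multiset.erase_cons_head]
  exact Multiset.cons_erase (Multiset.sup_mem_of_ne_zero hs)

theorem raiseMax_injOn : Set.InjOn (raiseMax m) {s | s ≠ 0} := fun s hs t ht h => by
  rw [← lowerMax_raiseMax hs, h, lowerMax_raiseMax ht]

end raiseMax

structure IsBiased (a b m n : ℕ) (q : Multiset ℕ × Multiset ℕ) : Prop where
  fst_pos : ∀ i ∈ q.1, 0 < i
  snd_pos : ∀ i ∈ q.2, 0 < i
  snd_nodup : q.2.Nodup
  bias : countRes m b q.1 + countRes m b q.2 < countRes m a q.1 + countRes m a q.2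
  sum_eq : q.1.sum + q.2.sum = n

def biasedPairs (a b m n : ℕ) : Finset (Multiset ℕ × Multiset ℕ) :=
  (Finset.HasAntidiagonal.antidiagonal n).biUnion fun kl =>
    ((Finset.univ : Finset (kl.1.Partition × kl.2.Partition)).filter
        (fun p => p.2.parts.Nodup ∧
          countRes m b p.1.parts + countRes m b p.2.parts <
            countRes m a p.1.parts + countRes m a p.2.parts)).image
      fun p => (p.1.parts, p.2.parts)

variable {a b m n : ℕ}

theorem mem_biasedPairs {q : Multiset ℕ × Multiset ℕ} :
    q ∈ biasedPairs a b m n ↔ IsBiased a b m n q := by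
  simp only [biasedPairs, Finset.mem_biUnion, Finset.mem_image, Finset.mem_filter,
    Finset.HasAntidiagonal.mem_antidiagonal, Finset.mem_univ, true_and]
  constructor
  · rintro ⟨kl, hkl, ⟨p₁, p₂⟩, ⟨hnodup, hbias⟩, rfl⟩
    refine ⟨fun i hi => p₁.parts_pos hi, fun i hi => p₂.parts_pos hi, hnodup, hbias, ?_⟩
    rwa [p₁.parts_sum, p₂.parts_sum]
  · rintro ⟨hpos₁, hpos₂, hnodup, hbias, hsum⟩
    exact ⟨(q.1.sum, q.2.sum), hsum, (⟨q.1, fun hi => hpos₁ _ hi, rfl⟩,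
      ⟨q.2, fun hi => hpos₂ _ hi, rfl⟩), ⟨hnodup, hbias⟩, rfl⟩

theorem pw_eq_sum_biasedPairs (x y : ℝ) :
    pw a b m x y n =
      ∑ q ∈ biasedPairs a b m n, x ^ Multiset.card q.1 * y ^ Multiset.card q.2 := by
  rw [pw, biasedPairs, Finset.sum_biUnion]
  · refine Finset.sum_congr rfl fun kl _ => ?_
    rw [Finset.sum_image]
    intro p _ p' _ h
    obtain ⟨h₁, h₂⟩ := Prod.mk.inj h
    exact Prod.ext (Nat.Partition.ext h₁) (Nat.Partition.ext h₂)
  · intro kl _ kl' _ hne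
    refine Finset.disjoint_left.mpr fun q hq hq' => hne ?_
    obtain ⟨p, -, rfl⟩ := Finset.mem_image.mp hq
    obtain ⟨p', -, hp'⟩ := Finset.mem_image.mp hq'
    obtain ⟨h₁, h₂⟩ := Prod.mk.inj hp'
    exact Prod.ext (by rw [← p.1.parts_sum, ← h₁, p'.1.parts_sum])
      (by rw [← p.2.parts_sum, ← h₂, p'.2.parts_sum])

theorem IsBiased.ne_zero {q : Multiset ℕ × Multiset ℕ} (hq : IsBiased a b m n q) :
    q ≠ 0 := by
  rintro rfl
  simpa using hq.bias

def raisePair (m : ℕ) (q : Multiset ℕ × Multiset ℕ) : Multiset ℕ × Multiset ℕ :=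
  if q.1 = 0 then (0, raiseMax m q.2) else (raiseMax m q.1, q.2)

theorem raisePair_of_fst_eq_zero {t : Multiset ℕ} : raisePair m (0, t) = (0, raiseMax m t) :=
  if_pos rfl

theorem raisePair_of_fst_ne_zero {s t : Multiset ℕ} (hs : s ≠ 0) :
    raisePair m (s, t) = (raiseMax m s, t) :=
  if_neg hs

theorem IsBiased.raisePair {q : Multiset ℕ × Multiset ℕ} (hq : IsBiased a b m n q) :
    IsBiased a b m (n + m) (raisePair m q) := by
  obtain ⟨s, t⟩ := q
  rcases eq_or_ne s 0 with rfl | hs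
  · have ht : t ≠ 0 := fun ht => hq.ne_zero (Prod.mk_eq_zero.mpr ⟨rfl, ht⟩)
    rw [raisePair_of_fst_eq_zero]
    refine ⟨by simp, fun i => pos_of_mem_raiseMax ht hq.snd_pos, nodup_raiseMax hq.snd_nodup,
      ?_, ?_⟩
    · simpa only [countRes_raiseMax _ ht] using hq.bias
    · simpa only [Multiset.sum_zero, zero_add, sum_raiseMax ht, add_left_inj] using hq.sum_eq
  · rw [raisePair_of_fst_ne_zero hs]
    refine ⟨fun i => pos_of_mem_raiseMax hs hq.fst_pos, hq.snd_pos, hq.snd_nodup, ?_, ?_⟩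
    · simpa only [countRes_raiseMax _ hs] using hq.bias
    · simp only [sum_raiseMax hs, ← hq.sum_eq]
      ring

theorem card_raisePair {q : Multiset ℕ × Multiset ℕ} (hq : q ≠ 0) :
    Multiset.card (raisePair m q).1 = Multiset.card q.1 ∧
      Multiset.card (raisePair m q).2 = Multiset.card q.2 := by
  obtain ⟨s, t⟩ := q
  rcases eq_or_ne s 0 with rfl | hs
  · have ht : t ≠ 0 := fun ht => hq (Prod.mk_eq_zero.mpr ⟨rfl, ht⟩)
    rw [raisePair_of_fst_eq_zero]
    exact ⟨rfl, card_raiseMax ht⟩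
  · rw [raisePair_of_fst_ne_zero hs]
    exact ⟨card_raiseMax hs, rfl⟩

theorem raisePair_injOn : Set.InjOn (raisePair m) {q | q ≠ 0} := by
  rintro ⟨s, t⟩ hq ⟨s', t'⟩ hq' h
  rcases eq_or_ne s 0 with rfl | hs <;> rcases eq_or_ne s' 0 with rfl | hs'
  · have ht : t ≠ 0 := fun ht => hq (Prod.mk_eq_zero.mpr ⟨rfl, ht⟩)
    have ht' : t' ≠ 0 := fun ht' => hq' (Prod.mk_eq_zero.mpr ⟨rfl, ht'⟩)
    rw [raisePair_of_fst_eq_zero, raisePair_of_fst_eq_zero, Prod.mk.injEq] at h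
    rw [raiseMax_injOn ht ht' h.2]
  · rw [raisePair_of_fst_eq_zero, raisePair_of_fst_ne_zero hs', Prod.mk.injEq] at h
    exact absurd h.1.symm raiseMax_ne_zero
  · rw [raisePair_of_fst_ne_zero hs, raisePair_of_fst_eq_zero, Prod.mk.injEq] at h
    exact absurd h.1 raiseMax_ne_zero
  · rw [raisePair_of_fst_ne_zero hs, raisePair_of_fst_ne_zero hs', Prod.mk.injEq] at h
    rw [raiseMax_injOn hs hs' h.1, h.2]

end BiasedPartition

open BiasedPartition in
theorem weighted_bias_monotone_general (a b m : ℕ) (x y : ℝ) (hx : 0 ≤ x) (hy : 0 ≤ y) (n : ℕ) :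
    pw a b m x y n ≤ pw a b m x y (n + m) := by
  rw [pw_eq_sum_biasedPairs, pw_eq_sum_biasedPairs]
  refine Finset.sum_le_sum_of_injOn (raisePair m)
    (raisePair_injOn.mono fun q hq => (mem_biasedPairs.mp hq).ne_zero)
    (fun q hq => mem_biasedPairs.mpr (mem_biasedPairs.mp hq).raisePair) (fun q hq => ?_)
    (fun q _ => by positivity)
  obtain ⟨h₁, h₂⟩ := card_raisePair (m := m) (mem_biasedPairs.mp hq).ne_zero
  rw [h₁, h₂]

/-- For `1 ≤ a < b ≤ m`, `x, y ≥ 0` and all `n ≥ 0`,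
`p_{n+m}(a,b,m;x,y) ≥ p_n(a,b,m;x,y)`. -/
theorem weighted_bias_monotone (a b m : ℕ) (ha : 1 ≤ a) (hab : a < b)
    (hbm : b ≤ m) (x y : ℝ) (hx : 0 ≤ x) (hy : 0 ≤ y) (n : ℕ) :
    pw a b m x y n ≤ pw a b m x y (n + m) :=
  weighted_bias_monotone_general a b m x y hx hy n
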